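/- arXiv:0812.1674 — 5 statements merged into one kernel-verified Lean document; each statement's English description precedes it below -/
import Mathlib

section
/- Let G be a group, X a G-category, and (X, ξ) a fixed 1-cocycle G → X. Equip End(X) with the G-action g•a = ξ_g ∘ g(a) ∘ ξ_g⁻¹. Then the assignment φ ↦ (X, (φ(g) ∘ ξ_g)_{g∈G}) is a bijection between 1-cocycles φ : G → End(X) (maps with φ(1) = 1 and φ(hg) = φ(h)·(h•φ(g))) and 1-cocycles (X, ξ') : G → X with underlying object X. -/
open CategoryTheory

/-!
Precomposition with the isomorphism `ξ g : g(pt) ⟶ pt` identifies `End(pt)` with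
`g(pt) ⟶ pt` for each `g`, so `φ ↦ (ξ g ≫ φ g)_g` is a bijection of families. It matches
the cocycle conditions: expanding `ξ (h * g)` by the cocycle identity of
`ξ` and cancelling the isomorphisms `eqToHom`, `h(ξ g)` and `ξ h` turns the cocycle identity
of `ξ ≫ φ` into the twisted cocycle identity of `φ`.
-/

namespace CategoryTheory.GCategory

variable {G : Type*} [Group G] {X : Type*} [Category X]
  (F : G → X ⥤ X) {pt : X} (ξ : ∀ g : G, (F g).obj pt ⟶ pt)

theorem comp_cocycle_one_iff (hone : F 1 = 𝟭 X) (hξone : ξ 1 = eqToHom (by rw [hone]; rfl))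
    (φ : pt ⟶ pt) :
    φ = 𝟙 pt ↔ ξ 1 ≫ φ = eqToHom (by rw [hone]; rfl) := by
  simp only [hξone, eqToHom_comp_iff, eqToHom_trans, eqToHom_refl]

theorem comp_cocycle_mul_iff {g h : G} (hmul : F (h * g) = F g ⋙ F h)
    (hξmul : ξ (h * g) = eqToHom (by rw [hmul]; rfl) ≫ (F h).map (ξ g) ≫ ξ h)
    [IsIso (ξ g)] [IsIso (ξ h)] (φhg φg φh : pt ⟶ pt) :
    φhg = (inv (ξ h) ≫ (F h).map φg ≫ ξ h) ≫ φh ↔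
      ξ (h * g) ≫ φhg =
        eqToHom (by rw [hmul]; rfl) ≫ (F h).map (ξ g ≫ φg) ≫ ξ h ≫ φh := by
  rw [hξmul, Functor.map_comp]
  simp only [Category.assoc, cancel_epi, IsIso.eq_inv_comp]

end CategoryTheory.GCategory

open CategoryTheory.GCategory in
/-- For a fixed 1-cocycle `(pt, ξ) : G → X`, equip `End(pt)` with the
`G`-action `g • a = ξ g ∘ g(a) ∘ (ξ g)⁻¹`. Then `φ ↦ (pt, (φ g ∘ ξ g)_g)` is a
bijection between 1-cocycles `φ : G → End(pt)` and 1-cocycles `G → X` with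
underlying object `pt`. -/
theorem cocycles_with_fixed_object {G : Type*} [Group G] {X : Type*} [Category X]
    (F : G → X ⥤ X) (hone : F 1 = 𝟭 X) (hmul : ∀ g h : G, F (h * g) = F g ⋙ F h)
    (pt : X) (ξ : ∀ g : G, (F g).obj pt ⟶ pt)
    (hξone : ξ 1 = eqToHom (by rw [hone]; rfl))
    (hξmul : ∀ g h : G,
      ξ (h * g) = eqToHom (by rw [hmul g h]; rfl) ≫ (F h).map (ξ g) ≫ ξ h)
    (hiso : ∀ g : G, IsIso (ξ g)) :
    ∃ e : {φ : G → (pt ⟶ pt) // φ 1 = 𝟙 pt ∧ ∀ g h : G,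
            φ (h * g) = (haveI := hiso h; inv (ξ h) ≫ (F h).map (φ g) ≫ ξ h) ≫ φ h} ≃
          {ξ' : ∀ g : G, (F g).obj pt ⟶ pt // ξ' 1 = eqToHom (by rw [hone]; rfl) ∧
            ∀ g h : G, ξ' (h * g) =
              eqToHom (by rw [hmul g h]; rfl) ≫ (F h).map (ξ' g) ≫ ξ' h},
      ∀ φ g, (e φ).1 g = ξ g ≫ φ.1 g :=
  ⟨(Equiv.piCongrRight fun g => (asIso (ξ g)).symm.homFromEquiv).subtypeEquiv fun φ =>
      and_congr (comp_cocycle_one_iff F ξ hone hξone (φ 1))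
        (forall₂_congr fun g h =>
          comp_cocycle_mul_iff F ξ (hmul g h) (hξmul g h) (φ (h * g)) (φ g) (φ h)),
    fun _ _ => rfl⟩
end

section
/- Let F ⊣ U be a G-Galois adjunction between a G-category X (with G-indexed coproducts) and a category Y. Then Y is equivalent to the category Z¹(G,X) of 1-cocycles G → X; under the equivalence, an object Y of Y corresponds to the 1-cocycle (U(Y), (U(ε_Y) ∘ η_{g(U(Y))})_{g∈G}). -/
open CategoryTheory CategoryTheory.Limits

variable {G : Type*} [Group G] {X : Type*} [Category X]

/-- A 1-cocycle `G → X` for a `G`-category `X`. -/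
structure Cocycle (F : G → X ⥤ X) (hone : F 1 = 𝟭 X)
    (hmul : ∀ g h : G, F (h * g) = F g ⋙ F h) where
  pt : X
  ξ : ∀ g : G, (F g).obj pt ⟶ pt
  ξ_one : ξ 1 = eqToHom (by rw [hone]; rfl)
  ξ_mul : ∀ g h : G, ξ (h * g) = eqToHom (by rw [hmul g h]; rfl) ≫ (F h).map (ξ g) ≫ ξ h

/-- The category `Z¹(G,X)` of 1-cocycles. -/
instance Cocycle.category (F : G → X ⥤ X) (hone : F 1 = 𝟭 X)
    (hmul : ∀ g h : G, F (h * g) = F g ⋙ F h) :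
    Category (Cocycle F hone hmul) where
  Hom c d := {f : c.pt ⟶ d.pt // ∀ g : G, (F g).map f ≫ d.ξ g = c.ξ g ≫ f}
  id c := ⟨𝟙 c.pt, by intro g; simp⟩
  comp {c d e} f k := ⟨f.1 ≫ k.1, by
    intro g
    rw [Functor.map_comp, Category.assoc, k.2 g, ← Category.assoc, f.2 g, Category.assoc]⟩
  id_comp f := by apply Subtype.ext; simp
  comp_id f := by apply Subtype.ext; simp
  assoc f g h := by apply Subtype.ext; simp

/-!
Since `U` is monadic, `Y` is equivalent to the category of algebras of the monad `UF'`, so it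
suffices to identify algebras with cocycles. An algebra `a : UF'(x) ⟶ x` gives the cocycle
`ξ_g = η_{g(x)} ≫ a`: the unit law of `a` is the normalisation `ξ_1 = 𝟙`, and associativity of
`a` turns into the cocycle identity because `g` applied to `η_{h(x)}`, followed by `η_{g(UF'x)}`
and `U ε`, is `η_{gh(x)}`. Conversely, the Galois condition `∐_g g(x) ≅ UF'(x)` glues a cocycle to
a unique map `a`, and identities between maps out of `UF'(x)` or out of `g(UF'(x))` (note that `g`
acts by an automorphism of `X`, hence preserves coproducts) are tested on the maps `η_{h(x)}`.
-/

namespace CategoryTheory.Adjunction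

variable {C D : Type*} [Category C] [Category D] {L₁ L₂ : C ⥤ D} {R : D ⥤ C}

def toMonadIsoOfLeftAdjointUniq (adj₁ : L₁ ⊣ R) (adj₂ : L₂ ⊣ R) :
    adj₁.toMonad ≅ adj₂.toMonad :=
  MonadIso.mk (Functor.isoWhiskerRight (leftAdjointUniq adj₁ adj₂) R)
    (unit_leftAdjointUniq_hom_app adj₁ adj₂)
    (fun x => by
      change R.map (adj₁.counit.app (L₁.obj x)) ≫ R.map ((leftAdjointUniq adj₁ adj₂).hom.app x) =
        (R.map (L₁.map (R.map ((leftAdjointUniq adj₁ adj₂).hom.app x))) ≫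
          R.map ((leftAdjointUniq adj₁ adj₂).hom.app (R.obj (L₂.obj x)))) ≫
          R.map (adj₂.counit.app (L₂.obj x))
      simp only [← R.map_comp, Category.assoc, leftAdjointUniq_hom_app_counit]
      exact congrArg R.map (adj₁.counit.naturality _).symm)

lemma isEquivalence_comparison (adj₁ : L₁ ⊣ R) (adj₂ : L₂ ⊣ R)
    [(Monad.comparison adj₂).IsEquivalence] : (Monad.comparison adj₁).IsEquivalence := by
  let e := Monad.algebraEquivOfIsoMonads (toMonadIsoOfLeftAdjointUniq adj₁ adj₂).symm
  refine Functor.isEquivalence_of_iso (F := Monad.comparison adj₂ ⋙ e.functor) ?_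
  refine NatIso.ofComponents (fun y => Monad.Algebra.isoMk (Iso.refl _) ?_) (fun f => ?_)
  · change R.map (L₁.map (𝟙 _)) ≫ R.map (adj₁.counit.app y) =
      (R.map ((leftAdjointUniq adj₁ adj₂).hom.app (R.obj y)) ≫ R.map (adj₂.counit.app y)) ≫ 𝟙 _
    simp [← R.map_comp]
  · ext
    exact (Category.comp_id _).trans (Category.id_comp _).symm

end CategoryTheory.Adjunction

namespace GaloisAdjunction

section Twisted

variable {ι Y : Type*} [Category Y] (F : ι → X ⥤ X) {F' : X ⥤ Y} {U : Y ⥤ X} (adj : F' ⊣ U)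
  (hF : ∀ i, F i ⋙ F' = F')

lemma unit_app_comp_eqToHom {p q z : X} (h : p = q) (e : U.obj (F'.obj p) = z)
    (e' : U.obj (F'.obj q) = z) :
    adj.unit.app p ≫ eqToHom e = eqToHom h ≫ adj.unit.app q ≫ eqToHom e' := by
  subst h e
  simp

def twistedUnit (i : ι) (x : X) : (F i).obj x ⟶ U.obj (F'.obj x) :=
  adj.unit.app ((F i).obj x) ≫ eqToHom (congrArg U.obj (Functor.congr_obj (hF i) x))

lemma twistedUnit_naturality (i : ι) {x x' : X} (f : x ⟶ x') :
    (F i).map f ≫ twistedUnit F adj hF i x' = twistedUnit F adj hF i x ≫ U.map (F'.map f) := by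
  have hmap := Functor.congr_hom (hF i) f
  simp only [Functor.comp_map] at hmap
  rw [twistedUnit, twistedUnit, ← adj.unit_naturality_assoc, hmap]
  simp [eqToHom_map]

lemma map_twistedUnit_comp_counit (i : ι) (x : X) :
    F'.map (twistedUnit F adj hF i x) ≫ adj.counit.app (F'.obj x) =
      eqToHom (Functor.congr_obj (hF i) x) := by
  suffices ∀ (z : X) (y : Y) (e : F'.obj z = y),
      F'.map (adj.unit.app z ≫ eqToHom (congrArg U.obj e)) ≫ adj.counit.app y = eqToHom e from
    this _ _ _
  rintro z y rfl
  simp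

lemma map_comp_twistedUnit_comp (i : ι) {x x' : X} {a : U.obj (F'.obj x) ⟶ x}
    {a' : U.obj (F'.obj x') ⟶ x'} {f : x ⟶ x'} (hf : U.map (F'.map f) ≫ a' = a ≫ f) :
    (F i).map f ≫ twistedUnit F adj hF i x' ≫ a' = (twistedUnit F adj hF i x ≫ a) ≫ f := by
  rw [← Category.assoc, twistedUnit_naturality, Category.assoc, hf, Category.assoc]

variable [HasColimitsOfShape (Discrete ι) X]

noncomputable def galoisMap (x : X) : ∐ (fun i => (F i).obj x) ⟶ U.obj (F'.obj x) :=
  Sigma.desc fun i => twistedUnit F adj hF i x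

lemma map_twistedUnit_hom_ext {X' : Type*} [Category X'] (Φ : X ⥤ X')
    [PreservesColimitsOfShape (Discrete ι) Φ] {x : X} [IsIso (galoisMap F adj hF x)] {z : X'}
    {f₁ f₂ : Φ.obj (U.obj (F'.obj x)) ⟶ z}
    (h : ∀ i, Φ.map (twistedUnit F adj hF i x) ≫ f₁ = Φ.map (twistedUnit F adj hF i x) ≫ f₂) :
    f₁ = f₂ := by
  rw [← cancel_epi (Φ.map (galoisMap F adj hF x))]
  refine (isColimitOfPreserves Φ (colimit.isColimit _)).hom_ext fun ⟨i⟩ => ?_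
  simpa [galoisMap, ← Φ.map_comp_assoc] using h i

lemma forall_map_comp_twistedUnit_comp_iff {x x' : X} [IsIso (galoisMap F adj hF x)]
    {a : U.obj (F'.obj x) ⟶ x} {a' : U.obj (F'.obj x') ⟶ x'} {f : x ⟶ x'} :
    (∀ i, (F i).map f ≫ twistedUnit F adj hF i x' ≫ a' = (twistedUnit F adj hF i x ≫ a) ≫ f) ↔
      U.map (F'.map f) ≫ a' = a ≫ f := by
  refine ⟨fun h => map_twistedUnit_hom_ext F adj hF (𝟭 X) fun i => ?_,
    fun hf i => map_comp_twistedUnit_comp F adj hF i hf⟩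
  rw [Functor.id_map, ← Category.assoc, ← twistedUnit_naturality, Category.assoc, h i,
    Category.assoc]

end Twisted

variable {Y : Type*} [Category Y] (F : G → X ⥤ X) {F' : X ⥤ Y} {U : Y ⥤ X} (adj : F' ⊣ U)
  (hF : ∀ g : G, F g ⋙ F' = F')

lemma twistedUnit_one (hone : F 1 = 𝟭 X) (x : X) :
    twistedUnit F adj hF 1 x = eqToHom (Functor.congr_obj hone x) ≫ adj.unit.app x := by
  rw [twistedUnit, unit_app_comp_eqToHom adj (Functor.congr_obj hone x) _ rfl]
  simp

lemma twistedUnit_mul (hmul : ∀ g h : G, F (h * g) = F g ⋙ F h) (g h : G) (x : X) :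
    (F h).map (twistedUnit F adj hF g x) ≫ twistedUnit F adj hF h (U.obj (F'.obj x)) ≫
      U.map (adj.counit.app (F'.obj x)) =
      eqToHom (Functor.congr_obj (hmul g h) x).symm ≫ twistedUnit F adj hF (h * g) x := by
  rw [← Category.assoc, twistedUnit_naturality, Category.assoc, ← U.map_comp,
    map_twistedUnit_comp_counit]
  simp only [twistedUnit, eqToHom_map, Category.assoc, eqToHom_trans]
  exact unit_app_comp_eqToHom adj _ _ _

variable (hone : F 1 = 𝟭 X) (hmul : ∀ g h : G, F (h * g) = F g ⋙ F h)

lemma twistedUnit_one_comp {x : X} (a : U.obj (F'.obj x) ⟶ x) (ha : adj.unit.app x ≫ a = 𝟙 x) :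
    twistedUnit F adj hF 1 x ≫ a = eqToHom (Functor.congr_obj hone x) := by
  rw [twistedUnit_one F adj hF hone, Category.assoc, ha]
  simp

lemma twistedUnit_mul_comp {x : X} (a : U.obj (F'.obj x) ⟶ x)
    (ha : U.map (F'.map a) ≫ a = U.map (adj.counit.app (F'.obj x)) ≫ a) (g h : G) :
    twistedUnit F adj hF (h * g) x ≫ a = eqToHom (Functor.congr_obj (hmul g h) x) ≫
      (F h).map (twistedUnit F adj hF g x ≫ a) ≫ twistedUnit F adj hF h x ≫ a := by
  rw [(F h).map_comp, Category.assoc, ← Category.assoc ((F h).map a),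
    twistedUnit_naturality, Category.assoc, ha, ← Category.assoc (twistedUnit F adj hF h _),
    ← Category.assoc ((F h).map _), twistedUnit_mul F adj hF hmul]
  simp

def algebraToCocycle : adj.toMonad.Algebra ⥤ Cocycle F hone hmul where
  obj A :=
    { pt := A.A
      ξ := fun g => twistedUnit F adj hF g A.A ≫ A.a
      ξ_one := twistedUnit_one_comp F adj hF hone A.a A.unit
      ξ_mul := twistedUnit_mul_comp F adj hF hmul A.a A.assoc.symm }
  map f := ⟨f.f, fun g => map_comp_twistedUnit_comp F adj hF g f.h⟩

instance : (algebraToCocycle F adj hF hone hmul).Faithful :=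
  ⟨fun h => Monad.Algebra.Hom.ext (congrArg Subtype.val h)⟩

def actEquivalence (g : G) : X ≌ X :=
  CategoryTheory.Equivalence.mk (F g) (F g⁻¹)
    (eqToIso (by rw [← hmul g g⁻¹, inv_mul_cancel, hone]))
    (eqToIso (by rw [← hmul g⁻¹ g, mul_inv_cancel, hone]))

variable [HasColimitsOfShape (Discrete G) X]

lemma algebraToCocycle_full (hγ : ∀ x : X, IsIso (galoisMap F adj hF x)) :
    (algebraToCocycle F adj hF hone hmul).Full where
  map_surjective {A _} k :=
    ⟨⟨k.1, (forall_map_comp_twistedUnit_comp_iff F adj hF (x := A.A)).mp k.2⟩, rfl⟩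

section CocycleToAlgebra

variable (c : Cocycle F hone hmul) [IsIso (galoisMap F adj hF c.pt)]

noncomputable def cocycleStructureMap : U.obj (F'.obj c.pt) ⟶ c.pt :=
  inv (galoisMap F adj hF c.pt) ≫ Sigma.desc c.ξ

lemma twistedUnit_comp_cocycleStructureMap (g : G) :
    twistedUnit F adj hF g c.pt ≫ cocycleStructureMap F adj hF hone hmul c = c.ξ g := by
  rw [← Sigma.ι_desc (fun g => twistedUnit F adj hF g c.pt) g, cocycleStructureMap,
    Category.assoc, ← galoisMap, IsIso.hom_inv_id_assoc, Sigma.ι_desc]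

lemma unit_comp_cocycleStructureMap :
    adj.unit.app c.pt ≫ cocycleStructureMap F adj hF hone hmul c = 𝟙 c.pt := by
  have h := twistedUnit_comp_cocycleStructureMap F adj hF hone hmul c 1
  rw [twistedUnit_one F adj hF hone, Category.assoc, c.ξ_one, eqToHom_comp_iff] at h
  simpa using h

lemma map_cocycleStructureMap_comp [IsIso (galoisMap F adj hF (U.obj (F'.obj c.pt)))] :
    U.map (F'.map (cocycleStructureMap F adj hF hone hmul c)) ≫
        cocycleStructureMap F adj hF hone hmul c =
      U.map (adj.counit.app (F'.obj c.pt)) ≫ cocycleStructureMap F adj hF hone hmul c := by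
  set a := cocycleStructureMap F adj hF hone hmul c
  have ha := twistedUnit_comp_cocycleStructureMap F adj hF hone hmul c
  refine map_twistedUnit_hom_ext F adj hF (𝟭 X) fun g => ?_
  have : (F g).IsEquivalence := (actEquivalence F hone hmul g).isEquivalence_functor
  refine map_twistedUnit_hom_ext F adj hF (F g) fun h => ?_
  calc (F g).map (twistedUnit F adj hF h c.pt) ≫ (𝟭 X).map (twistedUnit F adj hF g _) ≫
          U.map (F'.map a) ≫ a
      = (F g).map (twistedUnit F adj hF h c.pt ≫ a) ≫ twistedUnit F adj hF g c.pt ≫ a := by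
        rw [Functor.id_map, ← Category.assoc (twistedUnit F adj hF g _),
          ← twistedUnit_naturality, Functor.map_comp, Category.assoc, Category.assoc]
    _ = eqToHom (Functor.congr_obj (hmul h g) c.pt).symm ≫ c.ξ (g * h) := by
        rw [ha, ha, c.ξ_mul h g]
        simp
    _ = (F g).map (twistedUnit F adj hF h c.pt) ≫ (𝟭 X).map (twistedUnit F adj hF g _) ≫
          U.map (adj.counit.app (F'.obj c.pt)) ≫ a := by
        rw [Functor.id_map, ← Category.assoc (twistedUnit F adj hF g _),
          ← Category.assoc ((F g).map _), twistedUnit_mul F adj hF hmul, Category.assoc, ha]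

end CocycleToAlgebra

lemma algebraToCocycle_essSurj (hγ : ∀ x : X, IsIso (galoisMap F adj hF x)) :
    (algebraToCocycle F adj hF hone hmul).EssSurj where
  mem_essImage c := by
    have := hγ c.pt
    have := hγ (U.obj (F'.obj c.pt))
    have ha := twistedUnit_comp_cocycleStructureMap F adj hF hone hmul c
    refine ⟨⟨c.pt, cocycleStructureMap F adj hF hone hmul c,
      unit_comp_cocycleStructureMap F adj hF hone hmul c,
      (map_cocycleStructureMap_comp F adj hF hone hmul c).symm⟩, ⟨?_⟩⟩
    exact
      { hom := ⟨𝟙 c.pt, fun g => by simpa [algebraToCocycle] using (ha g).symm⟩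
        inv := ⟨𝟙 c.pt, fun g => by simpa [algebraToCocycle] using ha g⟩
        hom_inv_id := Subtype.ext (Category.id_comp _)
        inv_hom_id := Subtype.ext (Category.id_comp _) }

lemma isEquivalence_algebraToCocycle (hγ : ∀ x : X, IsIso (galoisMap F adj hF x)) :
    (algebraToCocycle F adj hF hone hmul).IsEquivalence where
  full := algebraToCocycle_full F adj hF hone hmul hγ
  essSurj := algebraToCocycle_essSurj F adj hF hone hmul hγ

end GaloisAdjunction

/-- Let `(F' ⊣ U, η, ε)` be a `G`-Galois adjunction between a
`G`-category `X` with `G`-indexed coproducts and a category `Y`; that is,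
`F'(g(-)) = F'` for all `g`, each canonical morphism
`γ_x : ∐_{g} g(x) ⟶ U F'(x)` induced by the unit is an isomorphism, and `U` is
monadic. Then `Y` is equivalent to `Z¹(G,X)`, an object `y` corresponding to the
1-cocycle `(U y, (U(ε_y) ∘ η_{g(U y)})_{g})`. -/
theorem galois_adjunction_descent {Y : Type*} [Category Y]
    [HasColimitsOfShape (Discrete G) X]
    (F : G → X ⥤ X) (hone : F 1 = 𝟭 X) (hmul : ∀ g h : G, F (h * g) = F g ⋙ F h)
    (F' : X ⥤ Y) (U : Y ⥤ X) (adj : F' ⊣ U)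
    (hF : ∀ g : G, F g ⋙ F' = F')
    (hγ : ∀ x : X, IsIso (Sigma.desc fun g : G =>
      adj.unit.app ((F g).obj x) ≫ eqToHom (congrArg U.obj (Functor.congr_obj (hF g) x))))
    [MonadicRightAdjoint U] :
    ∃ e : Y ≌ Cocycle F hone hmul,
      ∃ hpt : ∀ y : Y, (e.functor.obj y).pt = U.obj y,
        ∀ (y : Y) (g : G),
          (e.functor.obj y).ξ g =
            eqToHom (by rw [hpt y]; rfl) ≫
              (adj.unit.app ((F g).obj (U.obj y)) ≫
                eqToHom (congrArg U.obj (Functor.congr_obj (hF g) (U.obj y))) ≫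
                U.map (adj.counit.app y)) ≫ eqToHom (hpt y).symm := by
  have := GaloisAdjunction.isEquivalence_algebraToCocycle F adj hF hone hmul hγ
  have := Adjunction.isEquivalence_comparison adj (monadicAdjunction U)
  refine ⟨(Monad.comparison adj).asEquivalence.trans
    (GaloisAdjunction.algebraToCocycle F adj hF hone hmul).asEquivalence, fun _ => rfl,
    fun y g => ?_⟩
  change GaloisAdjunction.twistedUnit F adj hF g (U.obj y) ≫ U.map (adj.counit.app y) =
    eqToHom rfl ≫ (adj.unit.app ((F g).obj (U.obj y)) ≫
      eqToHom (congrArg U.obj (Functor.congr_obj (hF g) (U.obj y))) ≫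
      U.map (adj.counit.app y)) ≫ eqToHom rfl
  simp [GaloisAdjunction.twistedUnit]
end

section
/- Let p : B → E be a homomorphism of nontrivial commutative rings, G a group acting on E on the right by ring automorphisms fixing the image of p. For each E-module D, define γ_D : E ⊗_B D → (G → D) by γ_D(e ⊗ d)(g) = (e·g)·d, where D on the target has the twisted E-module structure. If the map h : E ⊗_B E → (G → E), h(e ⊗ e')(g) = (e·g)·e', is bijective and γ_D is bijective for every E-module D, then G is finite. -/
/-!
Take `D = ℕ →₀ E`. An element of `E ⊗[B] D` is a finite sum of pure tensors `e ⊗ d`, and the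
image of `e ⊗ d` under `γ_D` takes values supported in `supp d`; so every function in the range
of `γ_D` has all its values supported in one finite set of indices. If `G` were infinite, a
function sending the `n`-th element of an embedded copy of `ℕ` to the basis vector `single n 1`
would escape this bound, contradicting surjectivity of `γ_D`.
-/

open scoped TensorProduct

universe u

namespace TensorProduct

variable {G B E M : Type*} [CommRing B] [CommRing E] [Algebra B E]
  [AddCommGroup M] [Module B M] [Module E M] [IsScalarTower B E M]
  (act : G → E ≃+* E) (hfix : ∀ (g : G) (b : B), act g (algebraMap B E b) = algebraMap B E b)

/-- The map `γ_M : E ⊗[B] M → (G → M)`, `e ⊗ m ↦ (g ↦ act g e • m)`. -/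
noncomputable def twistedSMul : E ⊗[B] M →ₗ[B] (G → M) :=
  LinearMap.pi fun g =>
    lift ((Algebra.lsmul B B M).toLinearMap ∘ₗ (AlgEquiv.ofRingEquiv (hfix g)).toLinearMap)

@[simp]
theorem twistedSMul_tmul (e : E) (m : M) (g : G) :
    twistedSMul act hfix (e ⊗ₜ m) g = act g e • m :=
  rfl

theorem exists_finset_support_twistedSMul_subset {ι : Type*} (y : E ⊗[B] (ι →₀ M)) :
    ∃ s : Finset ι, ∀ g : G, (twistedSMul act hfix y g).support ⊆ s := by
  classical
  induction y using TensorProduct.induction_on with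
  | zero => exact ⟨∅, fun g => by simp⟩
  | tmul e d => exact ⟨d.support, fun g => Finsupp.support_smul⟩
  | add y z hy hz =>
    obtain ⟨s, hs⟩ := hy
    obtain ⟨t, ht⟩ := hz
    refine ⟨s ∪ t, fun g => ?_⟩
    rw [map_add, Pi.add_apply]
    exact Finsupp.support_add.trans (Finset.union_subset_union (hs g) (ht g))

theorem twistedSMul_not_surjective [Nontrivial E] [Infinite G] :
    ¬ Function.Surjective (twistedSMul act hfix (M := ℕ →₀ E)) := by
  intro hsurj
  let ι := Infinite.natEmbedding G
  obtain ⟨y, hy⟩ := hsurj (Function.extend ι (fun n => Finsupp.single n 1) 0)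
  obtain ⟨s, hs⟩ := exists_finset_support_twistedSMul_subset act hfix y
  obtain ⟨n, hn⟩ := s.exists_notMem
  have hsupp : (twistedSMul act hfix y (ι n)).support = {n} := by
    rw [hy, ι.injective.extend_apply, Finsupp.support_single _ one_ne_zero]
  exact hn (hs (ι n) (hsupp ▸ Finset.mem_singleton_self n))

end TensorProduct

theorem galois_maps_bijective_implies_finite_general {G : Type*}
    {B E : Type u} [CommRing B] [CommRing E] [Nontrivial E] [Algebra B E]
    (act : G → E ≃+* E)
    (hfix : ∀ (g : G) (b : B), act g (algebraMap B E b) = algebraMap B E b)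
    (hγ : ∀ (D : Type u) [AddCommGroup D] [Module B D] [Module E D] [IsScalarTower B E D],
      ∀ f : (E ⊗[B] D) →+ (G → D),
        (∀ (e : E) (d : D) (g : G), f (e ⊗ₜ[B] d) g = act g e • d) →
          Function.Bijective f) :
    Finite G := by
  by_contra hG
  have : Infinite G := not_finite_iff_infinite.mp hG
  exact TensorProduct.twistedSMul_not_surjective act hfix
    (hγ (ℕ →₀ E) (TensorProduct.twistedSMul act hfix).toAddMonoidHom
      (TensorProduct.twistedSMul_tmul act hfix)).surjective

/-- Let `p : B → E` be a homomorphism of nontrivial commutative rings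
(encoded as `Algebra B E`), `G` a group acting on `E` on the right by ring
automorphisms fixing the image of `p`. If the map `h : E ⊗_B E → (G → E)`,
`h(e ⊗ e')(g) = (e·g)·e'`, is bijective and, for every `E`-module `D`, the map
`γ_D : E ⊗_B D → (G → D)`, `γ_D(e ⊗ d)(g) = (e·g)·d`, is bijective, then `G` is
finite. -/
theorem galois_maps_bijective_implies_finite {G : Type*} [Group G]
    {B E : Type u} [CommRing B] [CommRing E] [Nontrivial B] [Nontrivial E] [Algebra B E]
    (act : G → E ≃+* E)
    (hact1 : act 1 = RingEquiv.refl E)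
    (hactmul : ∀ g h : G, act (g * h) = (act g).trans (act h))
    (hfix : ∀ (g : G) (b : B), act g (algebraMap B E b) = algebraMap B E b)
    (hh : ∀ f : (E ⊗[B] E) →+ (G → E),
      (∀ (e e' : E) (g : G), f (e ⊗ₜ[B] e') g = act g e * e') → Function.Bijective f)
    (hγ : ∀ (D : Type u) [AddCommGroup D] [Module B D] [Module E D] [IsScalarTower B E D],
      ∀ f : (E ⊗[B] D) →+ (G → D),
        (∀ (e : E) (d : D) (g : G), f (e ⊗ₜ[B] d) g = act g e • d) →
          Function.Bijective f) :
    Finite G :=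
  galois_maps_bijective_implies_finite_general act hfix hγ
end

section
/- Let p : B → E be a G-Galois extension of commutative rings (G finite, acting on E by B-algebra automorphisms, with B ≅ E^G and the map h : E ⊗_B E → (G → E), h(e⊗e')(g) = g(e)·e', bijective). Then for every B-module A, the E-module E ⊗_B A with the G-action g·(e ⊗ a) = g(e) ⊗ a has fixed points (E ⊗_B A)^G isomorphic as a B-module to A via a ↦ 1 ⊗ a. -/
/-!
The trace `e ↦ ∑ g, g e` lands in `E^G = B`, so it is a `B`-linear map `T : E → B`. Pulling
`δ_1` back along the bijection `E ⊗_B E ≃ (G → E)` gives `xᵢ, yᵢ` with `∑ᵢ g(xᵢ) yᵢ = δ_{g,1}`,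
hence `∑ᵢ T(xᵢ) yᵢ = 1`. Then `T e = ∑ᵢ T(xᵢ) T(yᵢ e)` shows that the image of `T` is a finitely
generated idempotent ideal; it is generated by an idempotent which becomes a unit in `E`, so
`T w = 1` for some `w`. Now `R : e ⊗ a ↦ T(e w) • a` retracts `a ↦ 1 ⊗ a`, and every
`t ∈ E ⊗_B A` satisfies `∑ g, g(w) • g(t) = 1 ⊗ R(t)`, whose left side is `t` when `t` is fixed.
-/

open scoped TensorProduct

universe u

theorem Ideal.eq_top_of_isIdempotentElem_of_map_eq_top {R S : Type*} [CommRing R]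
    [CommSemiring S] {f : R →+* S} (hf : Function.Injective f) {J : Ideal R} (hfg : J.FG)
    (hJ : IsIdempotentElem J) (hmap : J.map f = ⊤) : J = ⊤ := by
  obtain ⟨ε, hε, rfl⟩ := (J.isIdempotentElem_iff_of_fg hfg).1 hJ
  rw [Ideal.submodule_span_eq, Ideal.map_span, Set.image_singleton,
    Ideal.span_singleton_eq_top] at hmap
  have hfε : IsIdempotentElem (f ε) := IsIdempotentElem.map hε f
  have hε₁ : ε = 1 := hf <| by rw [(IsIdempotentElem.iff_eq_one_of_isUnit hmap).1 hfε, map_one]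
  rw [hε₁, Ideal.submodule_span_eq, Ideal.span_singleton_one]

theorem LinearMap.range_eq_top_of_sum_algebraMap_mul_eq_one {B E ι : Type*} [CommRing B]
    [CommSemiring E] [Algebra B E] (hinj : Function.Injective (algebraMap B E)) (T : E →ₗ[B] B)
    (s : Finset ι) (x y : ι → E) (h : ∑ i ∈ s, algebraMap B E (T (x i)) * y i = 1) :
    LinearMap.range T = ⊤ := by
  set J : Ideal B := Ideal.span ((fun i => T (x i)) '' s)
  have hxJ : ∀ i ∈ s, T (x i) ∈ J := fun i hi => Ideal.subset_span ⟨i, hi, rfl⟩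
  have hT : ∀ e, T e = ∑ i ∈ s, T (x i) * T (y i * e) := fun e => by
    calc T e = T (∑ i ∈ s, T (x i) • (y i * e)) := by
          simp_rw [Algebra.smul_def, ← mul_assoc, ← Finset.sum_mul, h, one_mul]
      _ = _ := by simp only [map_sum, map_smul, smul_eq_mul]
  have hrange : LinearMap.range T ≤ J := by
    rintro _ ⟨e, rfl⟩
    rw [hT e]
    exact J.sum_mem fun i hi => J.mul_mem_right _ (hxJ i hi)
  have hidem : IsIdempotentElem J := by
    refine le_antisymm Ideal.mul_le_right (Ideal.span_le.2 ?_)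
    rintro _ ⟨j, -, rfl⟩
    change T (x j) ∈ J * J
    rw [hT]
    exact Ideal.sum_mem _ fun i hi => Ideal.mul_mem_mul (hxJ i hi) (hrange ⟨_, rfl⟩)
  have hmap : J.map (algebraMap B E) = ⊤ := by
    rw [Ideal.eq_top_iff_one, ← h]
    exact Ideal.sum_mem _ fun i hi => Ideal.mul_mem_right _ _ (Ideal.mem_map_of_mem _ (hxJ i hi))
  have hJ := Ideal.eq_top_of_isIdempotentElem_of_map_eq_top hinj
    (Submodule.fg_span (s.finite_toSet.image _) : J.FG) hidem hmap
  refine top_unique (hJ ▸ Ideal.span_le.2 ?_)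
  rintro _ ⟨i, -, rfl⟩
  exact ⟨x i, rfl⟩

theorem LinearMap.exists_algebraMap_comp_eq {R A M : Type*} [CommSemiring R] [Semiring A]
    [Algebra R A] [AddCommMonoid M] [Module R M] (hinj : Function.Injective (algebraMap R A))
    (f : M →ₗ[R] A) (hf : ∀ m, ∃ r, algebraMap R A r = f m) :
    ∃ T : M →ₗ[R] R, ∀ m, algebraMap R A (T m) = f m :=
  let e := LinearEquiv.ofInjective (Algebra.linearMap R A) hinj
  ⟨e.symm.toLinearMap ∘ₗ f.codRestrict (LinearMap.range (Algebra.linearMap R A)) hf,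
    fun m => congrArg Subtype.val (e.apply_symm_apply ⟨f m, hf m⟩)⟩

section GaloisTrace

variable {G B E : Type*} [CommSemiring B] [Semiring E] [Algebra B E]

def galoisTrace [Fintype G] (σ : G → E ≃ₐ[B] E) : E →ₗ[B] E := ∑ g, (σ g).toLinearMap

@[simp]
theorem galoisTrace_apply [Fintype G] (σ : G → E ≃ₐ[B] E) (e : E) :
    galoisTrace σ e = ∑ g, σ g e :=
  LinearMap.sum_apply _ _ _

theorem apply_galoisTrace [Group G] [Fintype G] {σ : G → E ≃ₐ[B] E}
    (hmul : ∀ g h x, σ (g * h) x = σ h (σ g x)) (h : G) (e : E) :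
    σ h (galoisTrace σ e) = galoisTrace σ e := by
  simp only [galoisTrace_apply, map_sum, ← hmul]
  exact Equiv.sum_comp (Equiv.mulRight h) (fun g => σ g e)

end GaloisTrace

section GaloisMap

variable {G B E : Type*} [CommSemiring B] [CommSemiring E] [Algebra B E]

def galoisMap (σ : G → E ≃ₐ[B] E) : E ⊗[B] E →ₐ[B] (G → E) :=
  Algebra.TensorProduct.productMap (AlgHom.pi fun g => (σ g).toAlgHom) (Pi.constAlgHom B G E)

@[simp]
theorem galoisMap_tmul (σ : G → E ≃ₐ[B] E) (e e' : E) (g : G) :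
    galoisMap σ (e ⊗ₜ e') g = σ g e * e' :=
  rfl

theorem exists_sum_galoisTrace_mul_eq_one [Fintype G] [Nonempty G] {σ : G → E ≃ₐ[B] E}
    (h : Function.Surjective (galoisMap σ)) :
    ∃ s : Finset (E × E), ∑ p ∈ s, galoisTrace σ p.1 * p.2 = 1 := by
  classical
  obtain ⟨g₀⟩ := ‹Nonempty G›
  obtain ⟨z, hz⟩ := h (Pi.single g₀ 1)
  obtain ⟨s, rfl⟩ := TensorProduct.exists_finset z
  refine ⟨s, ?_⟩
  calc ∑ p ∈ s, galoisTrace σ p.1 * p.2 = ∑ g, galoisMap σ (∑ p ∈ s, p.1 ⊗ₜ p.2) g := by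
        simp only [galoisTrace_apply, Finset.sum_mul, map_sum, Finset.sum_apply, galoisMap_tmul]
        exact Finset.sum_comm
    _ = 1 := by simp [hz]

end GaloisMap

section Descent

variable {B E A : Type*} [CommSemiring B] [CommSemiring E] [Algebra B E] [AddCommMonoid A]
  [Module B A]

def tensorRetraction (T : E →ₗ[B] B) (w : E) : E ⊗[B] A →ₗ[B] A :=
  TensorProduct.lid B A ∘ₗ LinearMap.rTensor A (T ∘ₗ LinearMap.mulRight B w)

@[simp]
theorem tensorRetraction_tmul (T : E →ₗ[B] B) (w e : E) (a : A) :
    tensorRetraction T w (e ⊗ₜ a) = T (e * w) • a :=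
  rfl

theorem tensorRetraction_one_tmul {T : E →ₗ[B] B} {w : E} (hw : T w = 1) (a : A) :
    tensorRetraction T w ((1 : E) ⊗ₜ a) = a := by
  rw [tensorRetraction_tmul, one_mul, hw, one_smul]

theorem sum_smul_apply_eq_one_tmul_tensorRetraction {G : Type*} [Fintype G]
    (σ : G → E ≃ₐ[B] E) {T : E →ₗ[B] B} (hT : ∀ e, algebraMap B E (T e) = galoisTrace σ e)
    (τ : G → E ⊗[B] A →+ E ⊗[B] A) (hτ : ∀ g e a, τ g (e ⊗ₜ a) = σ g e ⊗ₜ a) (w : E)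
    (t : E ⊗[B] A) : ∑ g, σ g w • τ g t = (1 : E) ⊗ₜ tensorRetraction T w t := by
  induction t using TensorProduct.induction_on with
  | zero => simp
  | tmul e a =>
    calc ∑ g, σ g w • τ g (e ⊗ₜ a) = galoisTrace σ (e * w) ⊗ₜ a := by
          simp [hτ, TensorProduct.smul_tmul', TensorProduct.sum_tmul, mul_comm]
      _ = _ := by
          rw [← hT, tensorRetraction_tmul, TensorProduct.tmul_smul, TensorProduct.smul_tmul',
            Algebra.smul_def, mul_one]
  | add t t' ht ht' => simp [Finset.sum_add_distrib, ht, ht', TensorProduct.tmul_add]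

end Descent

theorem galois_descent_fixed_points_general {G : Type*} [Group G] [Finite G]
    {B E : Type u} [CommRing B] [CommRing E] [Algebra B E]
    (act : G → E ≃+* E)
    (hactmul : ∀ g h : G, act (g * h) = (act g).trans (act h))
    (hfix : ∀ (g : G) (b : B), act g (algebraMap B E b) = algebraMap B E b)
    (hinj : Function.Injective (algebraMap B E))
    (hfixed : ∀ e : E, (∀ g : G, act g e = e) ↔ ∃ b : B, algebraMap B E b = e)
    (hh : ∀ f : (E ⊗[B] E) →+ (G → E),
      (∀ (e e' : E) (g : G), f (e ⊗ₜ[B] e') g = act g e * e') → Function.Bijective f)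
    (A : Type u) [AddCommGroup A] [Module B A]
    (σ : G → (E ⊗[B] A) →+ (E ⊗[B] A))
    (hσ : ∀ (g : G) (e : E) (a : A), σ g (e ⊗ₜ[B] a) = act g e ⊗ₜ[B] a) :
    Function.Injective (fun a : A => (1 : E) ⊗ₜ[B] a) ∧
    (∀ t : E ⊗[B] A, (∀ g : G, σ g t = t) ↔ ∃ a : A, (1 : E) ⊗ₜ[B] a = t) := by
  cases nonempty_fintype G
  let α : G → E ≃ₐ[B] E := fun g => AlgEquiv.ofRingEquiv (hfix g)
  have hmul : ∀ g h x, α (g * h) x = α h (α g x) := fun g h => DFunLike.congr_fun (hactmul g h)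
  obtain ⟨T, hT⟩ := (galoisTrace α).exists_algebraMap_comp_eq hinj fun e =>
    (hfixed _).1 fun g => apply_galoisTrace hmul g e
  obtain ⟨s, hs⟩ := exists_sum_galoisTrace_mul_eq_one (σ := α)
    (hh (galoisMap α).toRingHom.toAddMonoidHom fun _ _ _ => rfl).2
  obtain ⟨w, hw⟩ : ∃ w, T w = 1 := by
    rw [← LinearMap.mem_range,
      T.range_eq_top_of_sum_algebraMap_mul_eq_one hinj s Prod.fst Prod.snd (by simpa [hT] using hs)]
    exact Submodule.mem_top
  have htrace : ∑ g, α g w = 1 := by rw [← galoisTrace_apply, ← hT, hw, map_one]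
  refine ⟨Function.LeftInverse.injective (tensorRetraction_one_tmul hw),
    fun t => ⟨fun ht => ?_, ?_⟩⟩
  · refine ⟨_, (sum_smul_apply_eq_one_tmul_tensorRetraction α hT σ hσ w t).symm.trans ?_⟩
    simp only [ht, ← Finset.sum_smul, htrace, one_smul]
  · rintro ⟨a, rfl⟩ g
    rw [hσ, map_one]

/-- Let `p : B → E` be a `G`-Galois extension of commutative rings in
the sense of Chase–Harrison–Rosenberg (`G` finite, acting by ring automorphisms
fixing `p(B)` pointwise, `p` inducing `B ≅ E^G`, and `h : E ⊗_B E → (G → E)`,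
`h(e⊗e')(g) = g(e)·e'`, bijective). Then for every `B`-module `A`, the `G`-action
on `E ⊗_B A` given by `g·(e ⊗ a) = g(e) ⊗ a` has fixed points isomorphic to `A`
via `a ↦ 1 ⊗ a`: this map is injective with image exactly the fixed points. -/
theorem galois_descent_fixed_points {G : Type*} [Group G] [Finite G]
    {B E : Type u} [CommRing B] [CommRing E] [Nontrivial B] [Nontrivial E] [Algebra B E]
    (act : G → E ≃+* E)
    (hact1 : act 1 = RingEquiv.refl E)
    (hactmul : ∀ g h : G, act (g * h) = (act g).trans (act h))
    (hfix : ∀ (g : G) (b : B), act g (algebraMap B E b) = algebraMap B E b)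
    (hinj : Function.Injective (algebraMap B E))
    (hfixed : ∀ e : E, (∀ g : G, act g e = e) ↔ ∃ b : B, algebraMap B E b = e)
    (hh : ∀ f : (E ⊗[B] E) →+ (G → E),
      (∀ (e e' : E) (g : G), f (e ⊗ₜ[B] e') g = act g e * e') → Function.Bijective f)
    (A : Type u) [AddCommGroup A] [Module B A]
    (σ : G → (E ⊗[B] A) →+ (E ⊗[B] A))
    (hσ : ∀ (g : G) (e : E) (a : A), σ g (e ⊗ₜ[B] a) = act g e ⊗ₜ[B] a) :
    Function.Injective (fun a : A => (1 : E) ⊗ₜ[B] a) ∧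
    (∀ t : E ⊗[B] A, (∀ g : G, σ g t = t) ↔ ∃ a : A, (1 : E) ⊗ₜ[B] a = t) :=
  galois_descent_fixed_points_general act hactmul hfix hinj hfixed hh A σ hσ
end

section
/- Let E/B be a finite Galois extension of fields with Galois group G. Then H¹(G, GLₙ(E)) is trivial, where G acts on GLₙ(E) entrywise via its action on E: every 1-cocycle φ : G → GLₙ(E) (satisfying φ(hg) = φ(h)·(h·φ(g))) is a coboundary, i.e. there exists s ∈ GLₙ(E) with φ(g) = s·(g·s)⁻¹ for all g ∈ G. -/
/-!
Twist the entrywise action of `G` on `Eⁿ` by the cocycle: `g` acts by `v ↦ φ(g)·g(v)`. The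
averages `Σ_g φ(g)·g(v)` are fixed by this action, and by Dedekind's independence of characters
they span `Eⁿ` over `E`. Taking for the columns of `s` a basis of `Eⁿ` made of such fixed vectors
gives `φ(g)·g(s) = s` for every `g`.
-/

open Matrix

section Galois

variable {B E : Type*} [Field B] [Field E] [Algebra B E] [FiniteDimensional B E]

theorem AlgEquiv.eq_zero_of_forall_sum_mul_apply_eq_zero {c : (E ≃ₐ[B] E) → E}
    (hc : ∀ x, ∑ g, c g * g x = 0) : c = 0 := by
  have hli : LinearIndependent E fun g : E ≃ₐ[B] E => (g : E → E) :=
    (linearIndependent_monoidHom E E).comp (fun g : E ≃ₐ[B] E => ((g : E →+* E) : E →* E))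
      fun _ _ h => AlgEquiv.ext (DFunLike.congr_fun h :)
  funext g
  refine Fintype.linearIndependent_iff.mp hli c (funext fun x => ?_) g
  simpa [Finset.sum_apply] using hc x

variable {ι : Type*} [Fintype ι]

noncomputable def twistedTrace (φ : (E ≃ₐ[B] E) → Matrix ι ι E) (v : ι → E) : ι → E :=
  ∑ g, φ g *ᵥ (g ∘ v)

theorem twistedTrace_single [DecidableEq ι] (φ : (E ≃ₐ[B] E) → Matrix ι ι E) (k : ι) (x : E) :
    twistedTrace φ (Pi.single k x) = ∑ g, g x • (φ g).col k := by
  refine Finset.sum_congr rfl fun g _ => ?_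
  have hsingle : g ∘ Pi.single k x = Pi.single k (g x) := by
    ext i
    simp [Pi.single_apply, apply_ite g]
  rw [hsingle, mulVec_single]
  ext i
  simp [mul_comm]

theorem span_range_twistedTrace [DecidableEq ι] {φ : (E ≃ₐ[B] E) → Matrix ι ι E}
    (hφ₁ : φ 1 = 1) :
    Submodule.span E (Set.range (twistedTrace φ)) = ⊤ := by
  -- A functional vanishing on the averages vanishes, by Dedekind independence, on every column
  -- of every `φ g`, in particular on those of `φ 1 = 1`.
  by_contra hne
  obtain ⟨f, hf, hker⟩ := Submodule.exists_le_ker_of_lt_top _ (lt_top_iff_ne_top.mpr hne)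
  have hcol : ∀ g k, f ((φ g).col k) = 0 := by
    intro g k
    refine congrFun (AlgEquiv.eq_zero_of_forall_sum_mul_apply_eq_zero
      (c := fun g => f ((φ g).col k)) fun x => ?_) g
    simpa [twistedTrace_single, mul_comm] using
      hker (Submodule.subset_span ⟨Pi.single k x, rfl⟩)
  refine hf ((Pi.basisFun E ι).ext fun k => ?_)
  have hone : (1 : Matrix ι ι E).col k = Pi.single k 1 := by
    ext i
    simp [one_apply, Pi.single_apply]
  simpa [hφ₁, hone] using hcol 1 k

theorem twistedTrace_fixed {φ : (E ≃ₐ[B] E) → Matrix ι ι E}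
    (hφ : ∀ g h : E ≃ₐ[B] E, φ (h * g) = φ h * (φ g).map h) (h : E ≃ₐ[B] E) (v : ι → E) :
    φ h *ᵥ (h ∘ twistedTrace φ v) = twistedTrace φ v := by
  have hmap : h ∘ twistedTrace φ v = ∑ g, (φ g).map h *ᵥ ((h * g) ∘ v) := by
    ext i
    simp only [twistedTrace, Function.comp_apply, Finset.sum_apply, map_sum]
    exact Finset.sum_congr rfl fun g _ => RingHom.map_mulVec (h : E →+* E) _ _ i
  rw [hmap, mulVec_sum]
  refine Fintype.sum_equiv (Equiv.mulLeft h) _ _ fun g => ?_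
  rw [mulVec_mulVec, ← hφ]
  rfl

end Galois

theorem Matrix.exists_isUnit_forall_col_mem {K ι : Type*} [Field K] [Fintype ι] [DecidableEq ι]
    {s : Set (ι → K)} (hs : Submodule.span K s = ⊤) :
    ∃ M : Matrix ι ι K, IsUnit M ∧ ∀ j, M.col j ∈ s := by
  obtain ⟨b, hbs, hspan, hli⟩ := exists_linearIndependent K s
  let c : Module.Basis b K (ι → K) := .mk hli (by rw [Subtype.range_coe, hspan, hs])
  let c' := c.reindex (c.indexEquiv (Pi.basisFun K ι))
  refine ⟨(Matrix.of c')ᵀ, linearIndependent_cols_iff_isUnit.mp c'.linearIndependent, fun j => ?_⟩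
  rw [col_transpose]
  simpa [c', c] using hbs (Subtype.mem _)

theorem H1_GL_n_trivial_general {B E : Type*} [Field B] [Field E] [Algebra B E]
    [FiniteDimensional B E] (n : ℕ)
    (φ : (E ≃ₐ[B] E) → Matrix.GeneralLinearGroup (Fin n) E)
    (hφ : ∀ g h : E ≃ₐ[B] E,
      φ (h * g) = φ h * Matrix.GeneralLinearGroup.map ((h : E ≃+* E) : E →+* E) (φ g)) :
    ∃ s : Matrix.GeneralLinearGroup (Fin n) E,
      ∀ g : E ≃ₐ[B] E,
        φ g = s * (Matrix.GeneralLinearGroup.map ((g : E ≃+* E) : E →+* E) s)⁻¹ := by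
  let ψ g : Matrix (Fin n) (Fin n) E := φ g
  have hψ : ∀ g h, ψ (h * g) = ψ h * (ψ g).map h := fun g h => congrArg Units.val (hφ g h)
  have hφ₁ : φ 1 = 1 := by
    have hid : ∀ x : GL (Fin n) E,
        GeneralLinearGroup.map (((1 : E ≃ₐ[B] E) : E ≃+* E) : E →+* E) x = x :=
      fun x => Units.ext (Matrix.map_id' _)
    have h11 := hφ 1 1
    rwa [one_mul, hid, left_eq_mul] at h11
  obtain ⟨S, hS, hcol⟩ := exists_isUnit_forall_col_mem
    (span_range_twistedTrace (φ := ψ) (by simp [ψ, hφ₁]))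
  refine ⟨hS.unit, fun g => eq_mul_inv_of_mul_eq (Units.ext ?_)⟩
  ext i j
  obtain ⟨v, hv⟩ := hcol j
  have hfixed := congrFun (twistedTrace_fixed hψ g v) i
  rwa [hv] at hfixed

/-- For a finite Galois field extension `E/B` with Galois group
`G = Gal(E/B)` acting entrywise on `GLₙ(E)`, `H¹(G, GLₙ(E))` is trivial: every
1-cocycle `φ` (i.e. `φ(hg) = φ(h)·(h·φ(g))`) is a coboundary, i.e. there is
`s ∈ GLₙ(E)` with `φ(g) = s·(g·s)⁻¹` for all `g`. -/
theorem H1_GL_n_trivial {B E : Type*} [Field B] [Field E] [Algebra B E]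
    [IsGalois B E] [FiniteDimensional B E] (n : ℕ)
    (φ : (E ≃ₐ[B] E) → Matrix.GeneralLinearGroup (Fin n) E)
    (hφ : ∀ g h : E ≃ₐ[B] E,
      φ (h * g) = φ h * Matrix.GeneralLinearGroup.map ((h : E ≃+* E) : E →+* E) (φ g)) :
    ∃ s : Matrix.GeneralLinearGroup (Fin n) E,
      ∀ g : E ≃ₐ[B] E,
        φ g = s * (Matrix.GeneralLinearGroup.map ((g : E ≃+* E) : E →+* E) s)⁻¹ :=
  H1_GL_n_trivial_general n φ hφ
end
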